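/- For all z, z' ≥ 0, τ > 0 and c ≥ 0, the Robin heat kernel p_R(τ; z, z') = p_B(τ; z, z') + p_B(τ; z, -z') - 2∫_0^∞ e^{-w} p_B(τ; z, -w/c - z') dw satisfies 0 ≤ p_R(τ; z, z') ≤ 4 p_B(τ; z, z'), and the surface part p_{S,R}(τ; z, z') = p_R(τ; z, z') - p_B(τ; z, z') satisfies |p_{S,R}(τ; z, z')| ≤ 3 p_B(τ; z, -z'). -/
import Mathlib


open MeasureTheory Real

noncomputable def pB (τ z z' : ℝ) : ℝ :=
  (Real.sqrt (2 * Real.pi * τ))⁻¹ * Real.exp (-(z - z') ^ 2 / (2 * τ))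

/-- The Robin heat kernel; for `c = 0` (Neumann) the integral term is interpreted
as `2 * pB τ z (-z')`, so that `pR` reduces to the Neumann heat kernel. -/
noncomputable def pR (c τ z z' : ℝ) : ℝ :=
  if c = 0 then pB τ z z' + pB τ z (-z')
  else pB τ z z' + pB τ z (-z')
    - 2 * ∫ w in Set.Ioi (0 : ℝ), Real.exp (-w) * pB τ z (-(w / c) - z')

/-- The surface part of the Robin heat kernel. -/
noncomputable def pSR (c τ z z' : ℝ) : ℝ := pR c τ z z' - pB τ z z'

lemma pB_nonneg (τ z z' : ℝ) : 0 ≤ pB τ z z' := by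
  unfold pB; positivity

lemma pB_mono (τ z : ℝ) (hτ : 0 < τ) {a b : ℝ} (h : (z - b) ^ 2 ≤ (z - a) ^ 2) :
    pB τ z a ≤ pB τ z b := by
  unfold pB
  have hinv : (0:ℝ) ≤ (2 * τ)⁻¹ := by positivity
  have h2 := mul_le_mul_of_nonneg_right (neg_le_neg h) hinv
  apply mul_le_mul_of_nonneg_left _ (by positivity)
  apply Real.exp_le_exp.mpr
  rw [div_eq_mul_inv, div_eq_mul_inv]
  exact h2

theorem robin_heat_kernel_bounds (c τ z z' : ℝ) (hc : 0 ≤ c) (hτ : 0 < τ)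
    (hz : 0 ≤ z) (hz' : 0 ≤ z') :
    0 ≤ pR c τ z z' ∧ pR c τ z z' ≤ 4 * pB τ z z' ∧
      |pSR c τ z z'| ≤ 3 * pB τ z (-z') := by
  have hB0 := pB_nonneg τ z z'
  have hBn0 := pB_nonneg τ z (-z')
  have hle : pB τ z (-z') ≤ pB τ z z' := by
    apply pB_mono τ z hτ
    nlinarith
  by_cases h : c = 0
  · simp only [pSR, pR, if_pos h]
    refine ⟨by linarith, by linarith, ?_⟩
    rw [abs_of_nonneg (by linarith)]
    linarith
  · have hcpos : 0 < c := lt_of_le_of_ne hc (Ne.symm h)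
    set I : ℝ := ∫ w in Set.Ioi (0 : ℝ), Real.exp (-w) * pB τ z (-(w / c) - z') with hI
    have hbound : ∀ w ∈ Set.Ioi (0 : ℝ),
        Real.exp (-w) * pB τ z (-(w / c) - z') ≤ pB τ z (-z') * Real.exp (-1 * w) := by
      intro w hw
      rw [Set.mem_Ioi] at hw
      have h1 : pB τ z (-(w / c) - z') ≤ pB τ z (-z') := by
        apply pB_mono τ z hτ
        have : 0 ≤ w / c := by positivity
        nlinarith
      have : Real.exp (-w) * pB τ z (-(w / c) - z') ≤ Real.exp (-w) * pB τ z (-z') := by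
        apply mul_le_mul_of_nonneg_left h1 (Real.exp_nonneg _)
      calc Real.exp (-w) * pB τ z (-(w / c) - z') ≤ Real.exp (-w) * pB τ z (-z') := this
        _ = pB τ z (-z') * Real.exp (-1 * w) := by ring_nf
    have hgint : IntegrableOn (fun w : ℝ => pB τ z (-z') * Real.exp (-1 * w)) (Set.Ioi 0) :=
      (exp_neg_integrableOn_Ioi 0 one_pos).const_mul _
    have hcont : Continuous fun w : ℝ => Real.exp (-w) * pB τ z (-(w / c) - z') := by
      unfold pB
      fun_prop
    have hfint : IntegrableOn (fun w : ℝ => Real.exp (-w) * pB τ z (-(w / c) - z'))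
        (Set.Ioi 0) := by
      apply Integrable.mono' hgint hcont.aestronglyMeasurable.restrict
      filter_upwards [ae_restrict_mem measurableSet_Ioi] with w hw
      rw [Real.norm_eq_abs, abs_of_nonneg (by
        have := pB_nonneg τ z (-(w / c) - z'); positivity)]
      exact hbound w hw
    have hInn : 0 ≤ I := by
      apply setIntegral_nonneg measurableSet_Ioi
      intro w _
      have := pB_nonneg τ z (-(w / c) - z')
      positivity
    have hIle : I ≤ pB τ z (-z') := by
      have := setIntegral_mono_on hfint hgint measurableSet_Ioi hbound
      have heq : (∫ w in Set.Ioi (0 : ℝ), pB τ z (-z') * Real.exp (-1 * w))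
          = pB τ z (-z') := by
        rw [MeasureTheory.integral_const_mul]
        simp only [neg_one_mul]
        rw [integral_exp_neg_Ioi_zero, mul_one]
      rw [heq] at this
      exact this
    simp only [pSR, pR, if_neg h, ← hI]
    refine ⟨by linarith, by linarith, ?_⟩
    rw [abs_le]
    constructor <;> linarith
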